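/- arXiv:1403.4104 — 2 statements merged into one kernel-verified Lean document; each statement's English description precedes it below -/
import Mathlib

section
/- Let K be a field, < a monomial order on ℕⁿ × {1,…,s}, and I a submodule of K[x₁,…,xₙ]^s whose leading module lm(I) is an echelon: its exponent set is the finite disjoint union over k = 1,…,r of boxes {(α_k+β, ℓ_k) : β ∈ ℕⁿ with βᵢ = 0 for all i > n_k}. Let G₁,…,G_r ∈ I be polynomial vectors with lm(G_k) = x^{α_k} e_{ℓ_k} (a polynomial Janet basis of I with scopes n_k). Then every F ∈ K[x]^s admits a unique decomposition F = Σ_{k=1}^r A_k G_k + C with A_k a polynomial in the variables x₁,…,x_{n_k} only and C ∈ co(I). -/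
/-- A monomial order on `(Fin n →₀ ℕ) × Fin s`. -/
structure MonOrder (n s : ℕ) where
  lt : ((Fin n →₀ ℕ) × Fin s) → ((Fin n →₀ ℕ) × Fin s) → Prop
  trichotomous : ∀ a b, lt a b ∨ a = b ∨ lt b a
  trans : ∀ a b c, lt a b → lt b c → lt a c
  add_compat : ∀ a b (γ : Fin n →₀ ℕ), lt a b → lt (a.1 + γ, a.2) (b.1 + γ, b.2)
  zero_min : ∀ (α : Fin n →₀ ℕ) (ℓ : Fin s), (0 : Fin n →₀ ℕ) = α ∨ lt (0, ℓ) (α, ℓ)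
  wf : WellFounded lt

variable {K : Type*} [Field K] {n s : ℕ}

/-- Support of a polynomial vector. -/
def pvsupp (F : Fin s → MvPolynomial (Fin n) K) : Set ((Fin n →₀ ℕ) × Fin s) :=
  {p | MvPolynomial.coeff p.1 (F p.2) ≠ 0}

/-- The monomial vector `x^α · e_ℓ` in `K[x]^s`. -/
noncomputable def pMonVec (K : Type*) [Field K] {n s : ℕ} (α : Fin n →₀ ℕ) (ℓ : Fin s) :
    Fin s → MvPolynomial (Fin n) K :=
  Pi.single ℓ (MvPolynomial.monomial α 1)

/-- `(α,ℓ)` is the exponent of the leading monomial vector of `F` (the `<`-maximum of the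
support). -/
def IsLeading (o : MonOrder n s) (F : Fin s → MvPolynomial (Fin n) K)
    (p : (Fin n →₀ ℕ) × Fin s) : Prop :=
  p ∈ pvsupp F ∧ ∀ q ∈ pvsupp F, q ≠ p → o.lt q p

/-- The leading module of a submodule `I` of `K[x]^s`. -/
noncomputable def lmMod (o : MonOrder n s)
    (I : Submodule (MvPolynomial (Fin n) K) (Fin s → MvPolynomial (Fin n) K)) :
    Submodule (MvPolynomial (Fin n) K) (Fin s → MvPolynomial (Fin n) K) :=
  Submodule.span _ {v | ∃ F ∈ I, F ≠ 0 ∧ ∃ p, IsLeading o F p ∧ v = pMonVec K p.1 p.2}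

/-- The canonical direct monomial complement of `lm(I)` in `K[x]^s`. -/
def pCoMod (o : MonOrder n s)
    (I : Submodule (MvPolynomial (Fin n) K) (Fin s → MvPolynomial (Fin n) K)) :
    Set (Fin s → MvPolynomial (Fin n) K) :=
  {C | ∀ p ∈ pvsupp C, pMonVec K p.1 p.2 ∉ lmMod o I}

/-- The box with vertex `(α,ℓ)` and scope `m`. -/
def pBoxAt {n s : ℕ} (p : (Fin n →₀ ℕ) × Fin s) (m : ℕ) : Set ((Fin n →₀ ℕ) × Fin s) :=
  {q | ∃ β : Fin n →₀ ℕ, (∀ i : Fin n, m ≤ (i : ℕ) → β i = 0) ∧ q = (p.1 + β, p.2)}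

/-- A polynomial depends only on the variables `x₁,…,x_m`. -/
def pDependsOnFirst (m : ℕ) (A : MvPolynomial (Fin n) K) : Prop :=
  ∀ β : Fin n →₀ ℕ, MvPolynomial.coeff β A ≠ 0 → ∀ i : Fin n, m ≤ (i : ℕ) → β i = 0

/-!
Division is the usual reduction of leading terms: if the leading exponent of `F` lies in the box
of `G k`, subtract a monomial multiple of `G k` whose multiplier uses only the multiplicative
variables `x₁,…,x_{n_k}`; otherwise move the leading term of `F` to the remainder. This terminates
because the monomial order is well founded. For uniqueness, the leading exponent of `B k • G k`
lies in the `k`-th box and the boxes are disjoint, so in `∑ k, B k • G k` the largest of these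
leading exponents survives; it lies in `lm(I)`, hence not in the support of an element of `co(I)`.
-/

open MvPolynomial

namespace MonOrder

variable (o : MonOrder n s)

instance : IsStrictTotalOrder ((Fin n →₀ ℕ) × Fin s) o.lt where
  trichotomous a b h₁ h₂ := ((o.trichotomous a b).resolve_left h₁).resolve_right h₂
  irrefl := o.wf.irrefl.irrefl
  trans := o.trans

theorem exists_forall_lt_of_finite {t : Set ((Fin n →₀ ℕ) × Fin s)} (ht : t.Finite)
    (hne : t.Nonempty) : ∃ p ∈ t, ∀ q ∈ t, q ≠ p → o.lt q p := by
  obtain ⟨p, hp, hmax⟩ :=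
    (Set.wellFoundedOn_iff.1 (ht.wellFoundedOn (r := Function.swap o.lt))).has_min t hne
  refine ⟨p, hp, fun q hq hqp => ?_⟩
  rcases trichotomous_of o.lt q p with h | h | h
  · exact h
  · exact absurd h hqp
  · exact absurd ⟨h, hq, hp⟩ (hmax q hq)

end MonOrder

section Support

theorem mem_pvsupp {F : Fin s → MvPolynomial (Fin n) K} {p : (Fin n →₀ ℕ) × Fin s} :
    p ∈ pvsupp F ↔ coeff p.1 (F p.2) ≠ 0 := Iff.rfl

theorem pvsupp_finite (F : Fin s → MvPolynomial (Fin n) K) : (pvsupp F).Finite :=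
  (Set.finite_iUnion fun ℓ => (F ℓ).support.finite_toSet.image fun α => (α, ℓ)).subset
    fun p hp => Set.mem_iUnion.2 ⟨p.2, p.1, mem_support_iff.2 hp, rfl⟩

theorem pvsupp_nonempty {F : Fin s → MvPolynomial (Fin n) K} (hF : F ≠ 0) :
    (pvsupp F).Nonempty := by
  obtain ⟨ℓ, hℓ⟩ := Function.ne_iff.1 hF
  obtain ⟨α, hα⟩ := ne_zero_iff.1 hℓ
  exact ⟨(α, ℓ), hα⟩

theorem pvsupp_add_subset (F F' : Fin s → MvPolynomial (Fin n) K) :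
    pvsupp (F + F') ⊆ pvsupp F ∪ pvsupp F' := by
  intro p hp
  by_contra! h
  simp_all [mem_pvsupp]

theorem pvsupp_sub_subset (F F' : Fin s → MvPolynomial (Fin n) K) :
    pvsupp (F - F') ⊆ pvsupp F ∪ pvsupp F' := by
  intro p hp
  by_contra! h
  simp_all [mem_pvsupp]

theorem pvsupp_sum_subset {ι : Type*} (S : Finset ι) (F : ι → Fin s → MvPolynomial (Fin n) K) :
    pvsupp (∑ k ∈ S, F k) ⊆ ⋃ k ∈ S, pvsupp (F k) := by
  intro p hp
  rw [mem_pvsupp, Finset.sum_apply, coeff_sum] at hp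
  obtain ⟨k, hk, hpk⟩ := Finset.exists_ne_zero_of_sum_ne_zero hp
  exact Set.mem_biUnion hk hpk

theorem mem_pvsupp_single {ℓ : Fin s} {B : MvPolynomial (Fin n) K} {q : (Fin n →₀ ℕ) × Fin s} :
    q ∈ pvsupp (Pi.single ℓ B) ↔ q.2 = ℓ ∧ coeff q.1 B ≠ 0 := by
  rcases eq_or_ne q.2 ℓ with h | h <;> simp [mem_pvsupp, h]

theorem pvsupp_single_monomial {ℓ : Fin s} {α : Fin n →₀ ℕ} {a : K} (ha : a ≠ 0) :
    pvsupp (Pi.single ℓ (monomial α a)) = {(α, ℓ)} := by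
  ext q
  simp only [mem_pvsupp_single, coeff_monomial, Set.mem_singleton_iff, Prod.ext_iff]
  split_ifs with h <;> simp [ha, h, eq_comm, and_comm]

end Support

section Leading

variable (o : MonOrder n s)

theorem exists_isLeading {F : Fin s → MvPolynomial (Fin n) K} (hF : F ≠ 0) :
    ∃ p, IsLeading o F p :=
  o.exists_forall_lt_of_finite (pvsupp_finite F) (pvsupp_nonempty hF)

variable {o}

theorem isLeading_single_monomial {ℓ : Fin s} {α : Fin n →₀ ℕ} {a : K} (ha : a ≠ 0) :
    IsLeading o (Pi.single ℓ (monomial α a)) (α, ℓ) := by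
  refine ⟨?_, fun q hq hne => ?_⟩ <;> simp_all [pvsupp_single_monomial ha]

theorem IsLeading.le {F : Fin s → MvPolynomial (Fin n) K} {p q : (Fin n →₀ ℕ) × Fin s}
    (hF : IsLeading o F p) (hq : q ∈ pvsupp F) : q = p ∨ o.lt q p :=
  (eq_or_ne q p).imp_right (hF.2 q hq)

theorem IsLeading.sub {F T : Fin s → MvPolynomial (Fin n) K} {p : (Fin n →₀ ℕ) × Fin s}
    (hF : IsLeading o F p) (hT : IsLeading o T p) (hc : coeff p.1 (T p.2) = coeff p.1 (F p.2)) :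
    F - T = 0 ∨ ∃ p', IsLeading o (F - T) p' ∧ o.lt p' p := by
  refine or_iff_not_imp_left.2 fun h => ?_
  obtain ⟨p', hp'⟩ := exists_isLeading o h
  refine ⟨p', hp', ?_⟩
  have hne : p' ≠ p := by
    rintro rfl
    exact hp'.1 (by simp [hc])
  rcases pvsupp_sub_subset F T hp'.1 with h' | h'
  · exact hF.2 p' h' hne
  · exact (hT.le h').resolve_left hne

-- The leading exponent of the scalar `B` is taken in the component `p.2` of `lm(G)`, since the
-- order on exponents may differ from one component to another.
theorem IsLeading.lt_add_of_mem {B : MvPolynomial (Fin n) K} {G : Fin s → MvPolynomial (Fin n) K}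
    {β : Fin n →₀ ℕ} {p : (Fin n →₀ ℕ) × Fin s} (hB : IsLeading o (Pi.single p.2 B) (β, p.2))
    (hG : IsLeading o G p) {γ δ : Fin n →₀ ℕ} {m : Fin s} (hγ : coeff γ B ≠ 0)
    (hδ : (δ, m) ∈ pvsupp G) (hne : γ ≠ β ∨ (δ, m) ≠ p) :
    o.lt (γ + δ, m) (p.1 + β, p.2) := by
  rcases eq_or_ne γ β with rfl | hγβ
  · rcases hG.le hδ with hδ' | hδ'
    · simp_all
    · simpa [add_comm] using o.add_compat _ _ γ hδ'
  · have hγ' : o.lt (γ, p.2) (β, p.2) :=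
      hB.2 _ (mem_pvsupp_single.2 ⟨rfl, hγ⟩) (by simp [hγβ])
    rcases hG.le hδ with rfl | hδ'
    · simpa [add_comm] using o.add_compat _ _ δ hγ'
    · exact trans_of o.lt (by simpa [add_comm] using o.add_compat _ _ γ hδ')
        (by simpa [add_comm] using o.add_compat _ _ p.1 hγ')

theorem IsLeading.coeff_smul {B : MvPolynomial (Fin n) K} {G : Fin s → MvPolynomial (Fin n) K}
    {β : Fin n →₀ ℕ} {p : (Fin n →₀ ℕ) × Fin s} (hB : IsLeading o (Pi.single p.2 B) (β, p.2))
    (hG : IsLeading o G p) :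
    coeff (p.1 + β) ((B • G) p.2) = coeff β B * coeff p.1 (G p.2) := by
  rw [Pi.smul_apply, smul_eq_mul, coeff_mul, Finset.sum_eq_single_of_mem (β, p.1)
    (Finset.HasAntidiagonal.mem_antidiagonal.2 (add_comm β p.1))]
  rintro ⟨γ, δ⟩ hmem hne
  by_contra h
  have hlt := hB.lt_add_of_mem hG (left_ne_zero_of_mul h) (right_ne_zero_of_mul h)
    (by contrapose! hne; exact Prod.ext hne.1 (congrArg Prod.fst hne.2))
  rw [Finset.HasAntidiagonal.mem_antidiagonal.1 hmem] at hlt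
  exact irrefl_of o.lt _ hlt

theorem IsLeading.smul {B : MvPolynomial (Fin n) K} {G : Fin s → MvPolynomial (Fin n) K}
    {β : Fin n →₀ ℕ} {p : (Fin n →₀ ℕ) × Fin s} (hB : IsLeading o (Pi.single p.2 B) (β, p.2))
    (hG : IsLeading o G p) : IsLeading o (B • G) (p.1 + β, p.2) := by
  refine ⟨?_, fun ⟨α, m⟩ hq hne => ?_⟩
  · rw [mem_pvsupp, hB.coeff_smul hG]
    exact mul_ne_zero (mem_pvsupp_single.1 hB.1).2 hG.1
  · rw [mem_pvsupp, Pi.smul_apply, smul_eq_mul, coeff_mul] at hq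
    obtain ⟨⟨γ, δ⟩, hmem, h⟩ := Finset.exists_ne_zero_of_sum_ne_zero hq
    obtain rfl : γ + δ = α := Finset.HasAntidiagonal.mem_antidiagonal.1 hmem
    refine hB.lt_add_of_mem hG (left_ne_zero_of_mul h) (right_ne_zero_of_mul h) ?_
    contrapose! hne
    obtain ⟨rfl, rfl⟩ := hne
    simp [add_comm]

theorem exists_isLeading_sum {ι : Type*} {S : Finset ι} (hS : S.Nonempty)
    {F : ι → Fin s → MvPolynomial (Fin n) K} {p : ι → (Fin n →₀ ℕ) × Fin s}
    (hF : ∀ k ∈ S, IsLeading o (F k) (p k)) (hp : Set.InjOn p S) :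
    ∃ k ∈ S, IsLeading o (∑ k ∈ S, F k) (p k) := by
  obtain ⟨_, ⟨k, hk, rfl⟩, hmax⟩ :=
    o.exists_forall_lt_of_finite (S.finite_toSet.image p) (hS.to_set.image p)
  have hbelow : ∀ l ∈ S, l ≠ k → ∀ q ∈ pvsupp (F l), o.lt q (p k) := fun l hl hlk q hq =>
    have hlt := hmax _ ⟨l, hl, rfl⟩ fun h => hlk (hp hl hk h)
    ((hF l hl).le hq).elim (fun h => h ▸ hlt) (trans_of o.lt · hlt)
  refine ⟨k, hk, ?_, fun q hq hqk => ?_⟩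
  · rw [mem_pvsupp, Finset.sum_apply, coeff_sum, Finset.sum_eq_single_of_mem k hk]
    · exact (hF k hk).1
    · exact fun l hl hlk => not_not.1 fun h => irrefl_of o.lt _ (hbelow l hl hlk _ h)
  · obtain ⟨l, hl, hql⟩ := Set.mem_iUnion₂.1 (pvsupp_sum_subset S F hq)
    rcases eq_or_ne l k with rfl | hlk
    · exact (hF l hl).2 q hql hqk
    · exact hbelow l hl hlk q hql

end Leading

section DependsOnFirst

variable {m : ℕ}

theorem pDependsOnFirst_zero (m : ℕ) : pDependsOnFirst m (0 : MvPolynomial (Fin n) K) :=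
  fun β hβ => absurd (coeff_zero β) hβ

theorem pDependsOnFirst_monomial {β : Fin n →₀ ℕ} (hβ : ∀ i : Fin n, m ≤ (i : ℕ) → β i = 0)
    (a : K) : pDependsOnFirst m (monomial β a) := by
  intro γ hγ
  rw [coeff_monomial] at hγ
  split_ifs at hγ with h
  · exact h ▸ hβ
  · exact absurd rfl hγ

theorem pDependsOnFirst.add {A A' : MvPolynomial (Fin n) K} (hA : pDependsOnFirst m A)
    (hA' : pDependsOnFirst m A') : pDependsOnFirst m (A + A') := by
  classical
  intro β hβ
  rcases Finset.mem_union.1 (support_add (mem_support_iff.2 hβ)) with h | h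
  · exact hA β (mem_support_iff.1 h)
  · exact hA' β (mem_support_iff.1 h)

theorem pDependsOnFirst.sub {A A' : MvPolynomial (Fin n) K} (hA : pDependsOnFirst m A)
    (hA' : pDependsOnFirst m A') : pDependsOnFirst m (A - A') := by
  classical
  intro β hβ
  rcases Finset.mem_union.1 (support_sub _ _ _ (mem_support_iff.2 hβ)) with h | h
  · exact hA β (mem_support_iff.1 h)
  · exact hA' β (mem_support_iff.1 h)

theorem pDependsOnFirst.mem_pBoxAt {A : MvPolynomial (Fin n) K} (hA : pDependsOnFirst m A)
    {β : Fin n →₀ ℕ} (hβ : coeff β A ≠ 0) (p : (Fin n →₀ ℕ) × Fin s) :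
    (p.1 + β, p.2) ∈ pBoxAt p m :=
  ⟨β, hA β hβ, rfl⟩

end DependsOnFirst

section CoMod

variable {o : MonOrder n s}
  {I : Submodule (MvPolynomial (Fin n) K) (Fin s → MvPolynomial (Fin n) K)}

theorem zero_mem_pCoMod : (0 : Fin s → MvPolynomial (Fin n) K) ∈ pCoMod o I :=
  fun _ hp => absurd (by simp) hp

theorem add_mem_pCoMod {C C' : Fin s → MvPolynomial (Fin n) K} (hC : C ∈ pCoMod o I)
    (hC' : C' ∈ pCoMod o I) : C + C' ∈ pCoMod o I :=
  fun p hp => (pvsupp_add_subset C C' hp).elim (hC p) (hC' p)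

theorem sub_mem_pCoMod {C C' : Fin s → MvPolynomial (Fin n) K} (hC : C ∈ pCoMod o I)
    (hC' : C' ∈ pCoMod o I) : C - C' ∈ pCoMod o I :=
  fun p hp => (pvsupp_sub_subset C C' hp).elim (hC p) (hC' p)

theorem single_monomial_mem_pCoMod {α : Fin n →₀ ℕ} {ℓ : Fin s} (h : pMonVec K α ℓ ∉ lmMod o I)
    (a : K) : Pi.single ℓ (monomial α a) ∈ pCoMod o I := by
  rcases eq_or_ne a 0 with rfl | ha
  · simpa using zero_mem_pCoMod
  · intro p hp
    rw [pvsupp_single_monomial ha, Set.mem_singleton_iff] at hp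
    exact hp ▸ h

end CoMod

section Division

variable {o : MonOrder n s}
  {I : Submodule (MvPolynomial (Fin n) K) (Fin s → MvPolynomial (Fin n) K)}
  {r : ℕ} {pq : Fin r → (Fin n →₀ ℕ) × Fin s} {nsc : Fin r → ℕ}
  {G : Fin r → Fin s → MvPolynomial (Fin n) K}

variable (o I nsc G) in
def HasJanetDecomposition (F : Fin s → MvPolynomial (Fin n) K) : Prop :=
  ∃ (A : Fin r → MvPolynomial (Fin n) K) (C : Fin s → MvPolynomial (Fin n) K),
    (∀ k, pDependsOnFirst (nsc k) (A k)) ∧ C ∈ pCoMod o I ∧ F = ∑ k, A k • G k + C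

namespace HasJanetDecomposition

theorem zero : HasJanetDecomposition o I nsc G 0 :=
  ⟨0, 0, fun _ => pDependsOnFirst_zero _, zero_mem_pCoMod, by simp⟩

theorem add {F F' : Fin s → MvPolynomial (Fin n) K} (hF : HasJanetDecomposition o I nsc G F)
    (hF' : HasJanetDecomposition o I nsc G F') : HasJanetDecomposition o I nsc G (F + F') := by
  obtain ⟨A, C, hA, hC, rfl⟩ := hF
  obtain ⟨A', C', hA', hC', rfl⟩ := hF'
  refine ⟨A + A', C + C', fun k => (hA k).add (hA' k), add_mem_pCoMod hC hC', ?_⟩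
  simp only [Pi.add_apply, add_smul, Finset.sum_add_distrib]
  abel

theorem of_mem_pCoMod {C : Fin s → MvPolynomial (Fin n) K} (hC : C ∈ pCoMod o I) :
    HasJanetDecomposition o I nsc G C :=
  ⟨0, C, fun _ => pDependsOnFirst_zero _, hC, by simp⟩

theorem smul {k : Fin r} {B : MvPolynomial (Fin n) K} (hB : pDependsOnFirst (nsc k) B) :
    HasJanetDecomposition o I nsc G (B • G k) := by
  classical
  refine ⟨Pi.single k B, 0, fun l => ?_, zero_mem_pCoMod, by simp [Pi.single_apply, ite_smul]⟩
  rcases eq_or_ne l k with rfl | h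
  · simpa using hB
  · simpa [h] using pDependsOnFirst_zero (nsc l)

end HasJanetDecomposition

/-- The reduction step of the division algorithm. -/
theorem exists_hasJanetDecomposition_of_isLeading
    (hech : {q | pMonVec K q.1 q.2 ∈ lmMod o I} ⊆ ⋃ k, pBoxAt (pq k) (nsc k))
    (hGlm : ∀ k, IsLeading o (G k) (pq k)) {F : Fin s → MvPolynomial (Fin n) K}
    {p : (Fin n →₀ ℕ) × Fin s} (hF : IsLeading o F p) :
    ∃ T, HasJanetDecomposition o I nsc G T ∧ IsLeading o T p ∧
      coeff p.1 (T p.2) = coeff p.1 (F p.2) := by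
  by_cases hp : pMonVec K p.1 p.2 ∈ lmMod o I
  · obtain ⟨k, β, hβ, rfl⟩ := Set.mem_iUnion.1 (hech hp)
    have hd : coeff (pq k).1 (G k (pq k).2) ≠ 0 := (hGlm k).1
    have hB := isLeading_single_monomial (o := o) (ℓ := (pq k).2) (α := β)
      (div_ne_zero hF.1 hd)
    refine ⟨_, .smul (pDependsOnFirst_monomial hβ _), hB.smul (hGlm k), ?_⟩
    rw [hB.coeff_smul (hGlm k), coeff_monomial, if_pos rfl, div_mul_cancel₀ _ hd]
  · exact ⟨_, .of_mem_pCoMod (single_monomial_mem_pCoMod hp _), isLeading_single_monomial hF.1,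
      by simp⟩

theorem hasJanetDecomposition
    (hech : {q | pMonVec K q.1 q.2 ∈ lmMod o I} ⊆ ⋃ k, pBoxAt (pq k) (nsc k))
    (hGlm : ∀ k, IsLeading o (G k) (pq k)) (F : Fin s → MvPolynomial (Fin n) K) :
    HasJanetDecomposition o I nsc G F := by
  suffices h : ∀ p F, IsLeading o F p → HasJanetDecomposition o I nsc G F by
    rcases eq_or_ne F 0 with rfl | hF
    · exact .zero
    · obtain ⟨p, hp⟩ := exists_isLeading o hF
      exact h p F hp
  intro p
  induction p using o.wf.induction with
  | h p ih =>
    intro F hF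
    obtain ⟨T, hT, hTp, hc⟩ := exists_hasJanetDecomposition_of_isLeading hech hGlm hF
    have hFT : HasJanetDecomposition o I nsc G (F - T) := by
      rcases hF.sub hTp hc with h | ⟨p', hp', hlt⟩
      · exact h ▸ .zero
      · exact ih p' hlt _ hp'
    simpa using hFT.add hT

theorem eq_zero_of_sum_smul_mem_pCoMod
    (hdisj : ∀ k l, k ≠ l → Disjoint (pBoxAt (pq k) (nsc k)) (pBoxAt (pq l) (nsc l)))
    (hech : ⋃ k, pBoxAt (pq k) (nsc k) ⊆ {q | pMonVec K q.1 q.2 ∈ lmMod o I})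
    (hGlm : ∀ k, IsLeading o (G k) (pq k)) {B : Fin r → MvPolynomial (Fin n) K}
    (hB : ∀ k, pDependsOnFirst (nsc k) (B k)) (hC : ∑ k, B k • G k ∈ pCoMod o I) : B = 0 := by
  classical
  by_contra hne
  set S := Finset.univ.filter fun k => B k ≠ 0
  have hS : S.Nonempty := by
    obtain ⟨k, hk⟩ := Function.ne_iff.1 hne
    exact ⟨k, by simpa [S] using hk⟩
  have hlead : ∀ k, B k ≠ 0 → ∃ β, coeff β (B k) ≠ 0 ∧
      IsLeading o (B k • G k) ((pq k).1 + β, (pq k).2) := by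
    intro k hk
    obtain ⟨⟨β, ℓ⟩, hβ⟩ := exists_isLeading o (Pi.single_ne_zero_iff (i := (pq k).2).2 hk)
    obtain ⟨rfl, hβ'⟩ := mem_pvsupp_single.1 hβ.1
    exact ⟨β, hβ', hβ.smul (hGlm k)⟩
  choose! β hβ hβlead using hlead
  have hbox : ∀ k ∈ S, ((pq k).1 + β k, (pq k).2) ∈ pBoxAt (pq k) (nsc k) := fun k hk =>
    (hB k).mem_pBoxAt (hβ k (Finset.mem_filter.1 hk).2) _
  have hinj : Set.InjOn (fun k => ((pq k).1 + β k, (pq k).2)) S := fun k hk l hl h =>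
    by_contra fun hkl =>
      Set.disjoint_left.1 (hdisj k l hkl) (hbox k hk) (by simpa [h] using hbox l hl)
  obtain ⟨k, hk, hlead⟩ :=
    exists_isLeading_sum hS (fun k hk => hβlead k (Finset.mem_filter.1 hk).2) hinj
  rw [Finset.sum_filter_of_ne (p := fun k => B k ≠ 0) fun k _ h hk => h (by simp [hk])] at hlead
  exact hC _ hlead.1 (hech (Set.mem_iUnion.2 ⟨k, hbox k hk⟩))

end Division

theorem polynomial_division_janet_general (o : MonOrder n s)
    (I : Submodule (MvPolynomial (Fin n) K) (Fin s → MvPolynomial (Fin n) K))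
    (r : ℕ) (pq : Fin r → (Fin n →₀ ℕ) × Fin s) (nsc : Fin r → ℕ)
    (hdisj : ∀ k l, k ≠ l → Disjoint (pBoxAt (pq k) (nsc k)) (pBoxAt (pq l) (nsc l)))
    (hech : {q | pMonVec K q.1 q.2 ∈ lmMod o I} = ⋃ k, pBoxAt (pq k) (nsc k))
    (G : Fin r → (Fin s → MvPolynomial (Fin n) K))
    (hGlm : ∀ k, IsLeading o (G k) (pq k)) :
    ∀ F : Fin s → MvPolynomial (Fin n) K,
      ∃ (A : Fin r → MvPolynomial (Fin n) K) (C : Fin s → MvPolynomial (Fin n) K),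
        (∀ k, pDependsOnFirst (nsc k) (A k)) ∧ C ∈ pCoMod o I ∧
        F = (∑ k, A k • G k) + C ∧
        ∀ (A' : Fin r → MvPolynomial (Fin n) K) (C' : Fin s → MvPolynomial (Fin n) K),
          (∀ k, pDependsOnFirst (nsc k) (A' k)) → C' ∈ pCoMod o I →
          F = (∑ k, A' k • G k) + C' → A' = A ∧ C' = C := by
  intro F
  obtain ⟨A, C, hA, hC, rfl⟩ := hasJanetDecomposition hech.subset hGlm F
  refine ⟨A, C, hA, hC, rfl, fun A' C' hA' hC' h => ?_⟩
  have hsum : ∑ k, (A' - A) k • G k = C - C' := by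
    simp only [Pi.sub_apply, sub_smul, Finset.sum_sub_distrib]
    rw [sub_eq_sub_iff_add_eq_add, ← h, add_comm]
  have hA'A : A' - A = 0 := eq_zero_of_sum_smul_mem_pCoMod hdisj hech.superset hGlm
    (fun k => (hA' k).sub (hA k)) (hsum ▸ sub_mem_pCoMod hC hC')
  obtain rfl := sub_eq_zero.1 hA'A
  exact ⟨rfl, (add_left_cancel h).symm⟩

/-- Polynomial division by a Janet basis when `lm(I)` is an echelon (Theorem 4.4). -/
theorem polynomial_division_janet (hn : 1 ≤ n) (hs : 1 ≤ s) (o : MonOrder n s)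
    (I : Submodule (MvPolynomial (Fin n) K) (Fin s → MvPolynomial (Fin n) K))
    (r : ℕ) (pq : Fin r → (Fin n →₀ ℕ) × Fin s) (nsc : Fin r → ℕ)
    (hscope : ∀ k, nsc k ≤ n)
    (hdisj : ∀ k l, k ≠ l → Disjoint (pBoxAt (pq k) (nsc k)) (pBoxAt (pq l) (nsc l)))
    (hech : {q | pMonVec K q.1 q.2 ∈ lmMod o I} = ⋃ k, pBoxAt (pq k) (nsc k))
    (G : Fin r → (Fin s → MvPolynomial (Fin n) K))
    (hGI : ∀ k, G k ∈ I) (hGlm : ∀ k, IsLeading o (G k) (pq k)) :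
    ∀ F : Fin s → MvPolynomial (Fin n) K,
      ∃ (A : Fin r → MvPolynomial (Fin n) K) (C : Fin s → MvPolynomial (Fin n) K),
        (∀ k, pDependsOnFirst (nsc k) (A k)) ∧ C ∈ pCoMod o I ∧
        F = (∑ k, A k • G k) + C ∧
        ∀ (A' : Fin r → MvPolynomial (Fin n) K) (C' : Fin s → MvPolynomial (Fin n) K),
          (∀ k, pDependsOnFirst (nsc k) (A' k)) → C' ∈ pCoMod o I →
          F = (∑ k, A' k • G k) + C' → A' = A ∧ C' = C :=
  polynomial_division_janet_general o I r pq nsc hdisj hech G hGlm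
end

section
/- Let K be a field, H = (H₁,…,H_p) ∈ K[x,y]^p a mother code with baby series vector h = (h₁,…,h_p) ∈ K[[x]]^p, and let G₁,…,G_r ∈ K[x,y]^s be polynomial vectors; set g_k = G_k(x,h(x)) ∈ K[[x]]^s, regarded inside K[[x,y]]^s. Then the submodule of K[[x,y]]^s generated by the vectors (yᵢ − hᵢ)·e_ℓ (1 ≤ i ≤ p, 1 ≤ ℓ ≤ s) together with g₁,…,g_r equals the submodule generated by the vectors Hᵢ·e_ℓ (1 ≤ i ≤ p, 1 ≤ ℓ ≤ s) together with G₁,…,G_r. -/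
/-!
Let `J ⊆ K[[x,y]]` be the ideal generated by the `yᵢ - hᵢ(x)`. Substituting `y = h(x)` is the
identity modulo `J`, so `P - P(x,h) ∈ J` for every polynomial `P`; in particular `G_k ≡ g_k`
componentwise modulo `J`. To first order, `P - P(x,h) - ∑ⱼ ∂P/∂yⱼ(0) (yⱼ - hⱼ) ∈ 𝔪J`. For
`P = Hᵢ` the substituted term vanishes, so modulo `𝔪J` the `Hᵢ` are the images of the `yⱼ - hⱼ`
under the invertible Jacobian matrix, and Nakayama's lemma gives `(H₁,…,H_p) = J`. Hence both
submodules equal `J^s + ⟨g_k⟩ = J^s + ⟨G_k⟩`.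
-/

variable {K : Type*} [Field K] {n p : ℕ}

/-- Substitution of the power series vector `h` for the `y`-variables (and `xⱼ` for itself)
in a polynomial `H ∈ K[x,y]`, yielding a power series in `K[[x]]`. -/
noncomputable def substY (H : MvPolynomial (Fin n ⊕ Fin p) K)
    (h : Fin p → MvPowerSeries (Fin n) K) : MvPowerSeries (Fin n) K :=
  MvPolynomial.aeval (Sum.elim (fun j => MvPowerSeries.X j) h) H

/-- A mother code: a vector `H = (H₁,…,H_p)` of polynomials in `K[x,y]` with `H(0,0) = 0`
whose Jacobian matrix `(∂H_i/∂y_j)` is invertible at the origin. -/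
def IsMotherCode (H : Fin p → MvPolynomial (Fin n ⊕ Fin p) K) : Prop :=
  (∀ i, MvPolynomial.eval (0 : Fin n ⊕ Fin p → K) (H i) = 0) ∧
  IsUnit (Matrix.of fun i j : Fin p =>
    MvPolynomial.eval (0 : Fin n ⊕ Fin p → K) (MvPolynomial.pderiv (Sum.inr j) (H i)))

/-- A formal power series is algebraic if it satisfies a nontrivial polynomial relation
over `K[x₁,…,xₙ]`. -/
def IsAlgPS {n : ℕ} (f : MvPowerSeries (Fin n) K) : Prop :=
  ∃ (d : ℕ) (q : Fin (d + 1) → MvPolynomial (Fin n) K), (∃ i, q i ≠ 0) ∧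
    ∑ i : Fin (d + 1), (q i : MvPowerSeries (Fin n) K) * f ^ (i : ℕ) = 0

open scoped Classical in
/-- The natural inclusion `K[[x]] → K[[x,y]]`. -/
noncomputable def inclPS (f : MvPowerSeries (Fin n) K) :
    MvPowerSeries (Fin n ⊕ Fin p) K :=
  fun e =>
    if ∀ j : Fin p, e (Sum.inr j) = 0 then
      MvPowerSeries.coeff (Finsupp.comapDomain Sum.inl e Sum.inl_injective.injOn) f
    else 0

namespace MvPolynomial

theorem coe_eq_aeval_X {σ R : Type*} [CommSemiring R] (P : MvPolynomial σ R) :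
    (P : MvPowerSeries σ R) = aeval MvPowerSeries.X P := by
  induction P using MvPolynomial.induction_on with
  | C a => simp [MvPowerSeries.algebraMap_apply]
  | add P Q hP hQ => simp [hP, hQ]
  | mul_X P s hP => simp [hP]

variable {σ R S : Type*} [CommSemiring R] [CommRing S] [Algebra R S]

theorem aeval_sub_aeval_mem {J : Ideal S} {u v : σ → S} (huv : ∀ s, u s - v s ∈ J)
    (P : MvPolynomial σ R) : aeval u P - aeval v P ∈ J := by
  rw [← Ideal.Quotient.eq, ← Ideal.Quotient.mkₐ_eq_mk R, comp_aeval_apply, comp_aeval_apply]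
  congr 2 with s
  exact Ideal.Quotient.eq.mpr (huv s)

theorem aeval_sub_aeval_sub_sum_pderiv_mem_mul [Fintype σ] {I J : Ideal S} {u v : σ → S}
    (hu : ∀ s, u s ∈ I) (hv : ∀ s, v s ∈ I) (huv : ∀ s, u s - v s ∈ J) (P : MvPolynomial σ R) :
    aeval u P - aeval v P - ∑ s, algebraMap R S (eval 0 (pderiv s P)) * (u s - v s) ∈
      I * J := by
  classical
  induction P using MvPolynomial.induction_on with
  | C a => simp
  | add P Q hP hQ =>
    convert add_mem hP hQ using 1
    simp only [map_add, add_mul, Finset.sum_add_distrib]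
    ring
  | mul_X P s hP =>
    set L := ∑ t, algebraMap R S (eval 0 (pderiv t P)) * (u t - v t)
    have hL : L ∈ J := Ideal.sum_mem _ fun t _ => Ideal.mul_mem_left _ _ (huv t)
    have hvP : aeval v P - algebraMap R S (eval 0 P) ∈ I := by
      simpa using aeval_sub_aeval_mem (u := v) (v := 0) (by simpa using hv) P
    have hlin : ∑ t, algebraMap R S (eval 0 (pderiv t (P * X s))) * (u t - v t) =
        algebraMap R S (eval 0 P) * (u s - v s) := by
      simp [pderiv_X, Pi.single_apply, apply_ite]
    rw [hlin, map_mul, map_mul, aeval_X, aeval_X]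
    have key : aeval u P * u s - aeval v P * v s - algebraMap R S (eval 0 P) * (u s - v s) =
        u s * (aeval u P - aeval v P - L) + u s * L +
          (aeval v P - algebraMap R S (eval 0 P)) * (u s - v s) := by ring
    rw [key]
    exact add_mem (add_mem (Ideal.mul_mem_left _ _ hP) (Ideal.mul_mem_mul (hu s) hL))
      (Ideal.mul_mem_mul hvP (huv s))

end MvPolynomial

open Matrix in
theorem Matrix.mulVec_mem_of_forall_mem {m ι R : Type*} [Fintype ι] [Semiring R] {N : Ideal R}
    (b : Matrix m ι R) {w : ι → R} (hw : ∀ j, w j ∈ N) (i : m) : (b *ᵥ w) i ∈ N :=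
  Ideal.sum_mem _ fun j _ => Ideal.mul_mem_left _ _ (hw j)

namespace Ideal

open Matrix Set

theorem span_range_eq_of_sub_mulVec_mem_mul {ι R : Type*} [Fintype ι] [DecidableEq ι]
    [CommRing R] {I : Ideal R} (hI : I ≤ jacobson ⊥) {e f : ι → R} {c : Matrix ι ι R}
    (hc : IsUnit c) (hfe : ∀ i, f i - (c *ᵥ e) i ∈ I * span (range e)) :
    span (range f) = span (range e) := by
  have he : ∀ i, e i ∈ span (range e) := fun i => subset_span (mem_range_self i)
  have hf : ∀ i, f i ∈ span (range e) := fun i => by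
    rw [← add_sub_cancel ((c *ᵥ e) i) (f i)]
    exact add_mem (c.mulVec_mem_of_forall_mem he i) (mul_le_right (hfe i))
  refine le_antisymm (span_le.mpr (range_subset_iff.mpr hf)) ?_
  refine Submodule.le_of_le_smul_of_le_jacobson_bot (Submodule.fg_span (finite_range e)) hI ?_
  rw [span_le, range_subset_iff]
  intro i
  obtain ⟨b, hbc⟩ : ∃ b : Matrix ι ι R, b * c = 1 :=
    ⟨c⁻¹, nonsing_inv_mul c ((isUnit_iff_isUnit_det c).mp hc)⟩
  have hdecomp : e i = (b *ᵥ f) i - (b *ᵥ (f - c *ᵥ e)) i := by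
    rw [← Pi.sub_apply, ← mulVec_sub, sub_sub_cancel, mulVec_mulVec, hbc, one_mulVec]
  rw [hdecomp, sub_eq_add_neg, smul_eq_mul]
  exact Submodule.add_mem_sup
    (b.mulVec_mem_of_forall_mem (fun j => subset_span (mem_range_self j)) i)
    (neg_mem (b.mulVec_mem_of_forall_mem hfe i))

end Ideal

namespace Submodule

open Set

theorem span_pi_single_eq_pi {ι m R : Type*} [Fintype m] [DecidableEq m] [Semiring R]
    (e : ι → R) :
    span R {v : m → R | ∃ i ℓ, v = Pi.single ℓ (e i)} =
      pi univ fun _ => Ideal.span (range e) := by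
  apply le_antisymm
  · rw [span_le]
    rintro _ ⟨i, ℓ, rfl⟩ k -
    rcases eq_or_ne k ℓ with rfl | hk
    · simpa using Ideal.subset_span (mem_range_self i)
    · simp [hk]
  · intro v hv
    rw [← Finset.univ_sum_single v]
    refine sum_mem fun ℓ _ => ?_
    have hle : Ideal.span (range e) ≤
        (span R {v : m → R | ∃ i ℓ, v = Pi.single ℓ (e i)}).comap (LinearMap.single R _ ℓ) := by
      rw [Ideal.span, span_le, range_subset_iff]
      exact fun i => subset_span ⟨i, ℓ, rfl⟩
    exact hle (hv ℓ trivial)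

theorem sup_span_range_eq_of_sub_mem {R M κ : Type*} [Ring R] [AddCommGroup M] [Module R M]
    {N : Submodule R M} {g g' : κ → M} (hgg' : ∀ k, g k - g' k ∈ N) :
    N ⊔ span R (range g) = N ⊔ span R (range g') := by
  have key : ∀ g g' : κ → M, (∀ k, g k - g' k ∈ N) →
      N ⊔ span R (range g) ≤ N ⊔ span R (range g') := by
    intro g g' h
    refine sup_le le_sup_left (span_le.mpr (range_subset_iff.mpr fun k => ?_))
    rw [← sub_add_cancel (g k) (g' k)]
    exact add_mem_sup (h k) (subset_span ⟨k, rfl⟩)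
  exact le_antisymm (key g g' hgg') (key g' g fun k => by simpa using neg_mem (hgg' k))

end Submodule

open MvPowerSeries

theorem inclPS_eq_rename (f : MvPowerSeries (Fin n) K) :
    inclPS (p := p) f = rename Sum.inl f := by
  ext e
  change inclPS f e = _
  by_cases he : ∀ j : Fin p, e (Sum.inr j) = 0
  · have hsupp : ↑e.support ⊆ Set.range (Function.Embedding.inl : Fin n ↪ Fin n ⊕ Fin p) := by
      rintro (a | j) hs
      · exact ⟨a, rfl⟩
      · exact absurd (he j) (Finsupp.mem_support_iff.mp hs)
    conv_rhs => rw [← Finsupp.embDomain_comapDomain hsupp]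
    rw [inclPS, if_pos he]
    exact (coeff_embDomain_rename Function.Embedding.inl f _).symm
  · have hrange : e ∉ Set.range (Finsupp.mapDomain Sum.inl) := by
      simpa [Finsupp.mem_range_mapDomain_iff _ Sum.inl_injective] using he
    rw [coeff_rename_eq_zero _ _ hrange, inclPS, if_neg he]

/-- The point `(x, h(x))`, with coordinates in `K[[x,y]]`. -/
noncomputable def graphCoords (h : Fin p → MvPowerSeries (Fin n) K) :
    Fin n ⊕ Fin p → MvPowerSeries (Fin n ⊕ Fin p) K :=
  fun s => rename Sum.inl (Sum.elim X h s)

noncomputable def graphIdeal (h : Fin p → MvPowerSeries (Fin n) K) :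
    Ideal (MvPowerSeries (Fin n ⊕ Fin p) K) :=
  Ideal.span (Set.range fun i => X (Sum.inr i) - rename Sum.inl (h i))

theorem rename_substY (P : MvPolynomial (Fin n ⊕ Fin p) K)
    (h : Fin p → MvPowerSeries (Fin n) K) :
    rename Sum.inl (substY P h) = MvPolynomial.aeval (graphCoords h) P :=
  MvPolynomial.comp_aeval_apply _ (rename Sum.inl) P

theorem X_sub_graphCoords_mem_graphIdeal (h : Fin p → MvPowerSeries (Fin n) K)
    (s : Fin n ⊕ Fin p) : X s - graphCoords h s ∈ graphIdeal h := by
  rcases s with a | i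
  · simp [graphCoords]
  · exact Ideal.subset_span (Set.mem_range_self i)

theorem coe_sub_rename_substY_mem_graphIdeal (h : Fin p → MvPowerSeries (Fin n) K)
    (P : MvPolynomial (Fin n ⊕ Fin p) K) :
    (P : MvPowerSeries (Fin n ⊕ Fin p) K) - rename Sum.inl (substY P h) ∈ graphIdeal h := by
  rw [MvPolynomial.coe_eq_aeval_X, rename_substY]
  exact MvPolynomial.aeval_sub_aeval_mem (X_sub_graphCoords_mem_graphIdeal h) P

theorem span_range_coe_eq_graphIdeal {H : Fin p → MvPolynomial (Fin n ⊕ Fin p) K}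
    (hmc : IsMotherCode H) {h : Fin p → MvPowerSeries (Fin n) K}
    (h0 : ∀ i, constantCoeff (h i) = 0) (hH : ∀ i, substY (H i) h = 0) :
    Ideal.span (Set.range fun i => (H i : MvPowerSeries (Fin n ⊕ Fin p) K)) = graphIdeal h := by
  set R := MvPowerSeries (Fin n ⊕ Fin p) K
  have hmem : ∀ f : R, constantCoeff f = 0 → f ∈ IsLocalRing.maximalIdeal R := fun f hf => by
    rw [IsLocalRing.mem_maximalIdeal, mem_nonunits_iff, isUnit_iff_constantCoeff, hf]
    exact not_isUnit_zero
  have hcoords : ∀ s, graphCoords h s ∈ IsLocalRing.maximalIdeal R := by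
    rintro (a | i) <;> exact hmem _ (by simp [graphCoords, h0])
  refine Ideal.span_range_eq_of_sub_mulVec_mem_mul (IsLocalRing.maximalIdeal_le_jacobson ⊥)
    (hmc.2.map (algebraMap K R).mapMatrix) fun i => ?_
  have hTaylor := MvPolynomial.aeval_sub_aeval_sub_sum_pderiv_mem_mul
    (fun s => hmem _ (constantCoeff_X s)) hcoords (X_sub_graphCoords_mem_graphIdeal h) (H i)
  rw [← MvPolynomial.coe_eq_aeval_X, ← rename_substY, hH i, map_zero, sub_zero,
    Fintype.sum_sum_type] at hTaylor
  convert hTaylor using 2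
  · rfl
  · simp [graphCoords, Matrix.mulVec, dotProduct]

/-- Lemma 8.1: the submodule of `K[[x,y]]^s` generated by the `(yᵢ − hᵢ)·e_ℓ` together with
the `g_k = G_k(x,h(x))` equals the submodule generated by the `Hᵢ·e_ℓ` and the `G_k`. -/
theorem family_code_module_eq {r s : ℕ}
    (H : Fin p → MvPolynomial (Fin n ⊕ Fin p) K) (hmc : IsMotherCode H)
    (h : Fin p → MvPowerSeries (Fin n) K)
    (h0 : ∀ i, MvPowerSeries.constantCoeff (h i) = 0)
    (hH : ∀ i, substY (H i) h = 0)
    (G : Fin r → (Fin s → MvPolynomial (Fin n ⊕ Fin p) K)) :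
    Submodule.span (MvPowerSeries (Fin n ⊕ Fin p) K)
      ({v | ∃ (i : Fin p) (ℓ : Fin s),
          v = Pi.single ℓ (MvPowerSeries.X (Sum.inr i : Fin n ⊕ Fin p) - inclPS (h i))} ∪
        Set.range (fun k => fun m => inclPS (substY (G k m) h)) :
          Set (Fin s → MvPowerSeries (Fin n ⊕ Fin p) K)) =
    Submodule.span (MvPowerSeries (Fin n ⊕ Fin p) K)
      ({v | ∃ (i : Fin p) (ℓ : Fin s),
          v = Pi.single ℓ ((H i : MvPowerSeries (Fin n ⊕ Fin p) K))} ∪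
        Set.range (fun k => fun m => ((G k m : MvPolynomial (Fin n ⊕ Fin p) K) :
          MvPowerSeries (Fin n ⊕ Fin p) K))) := by
  simp_rw [inclPS_eq_rename]
  rw [Submodule.span_union, Submodule.span_union, Submodule.span_pi_single_eq_pi,
    Submodule.span_pi_single_eq_pi, span_range_coe_eq_graphIdeal hmc h0 hH]
  exact Submodule.sup_span_range_eq_of_sub_mem fun k m _ =>
    sub_mem_comm_iff.mp (coe_sub_rename_substY_mem_graphIdeal h (G k m))
end
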